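/- Let Q be a simple (n+1)-polytope with pairwise disjoint exceptional facets Q₁, …, Q_k containing all vertices of Q, λ an isotropy function, and W(Q,λ) = (𝕋ⁿ × Q)/∼_b. Then for each j, the subspace π⁻¹(Q_j) ⊆ W(Q,λ) is homeomorphic to the quasitoric orbifold space (𝕋ⁿ × Q_j)/∼ of the characteristic model (Q_j, ξʲ), where ξʲ is the restriction of λ to the facets of Q_j. -/

import Mathlib

open Set

variable {V : Type*} [AddCommGroup V] [Module ℝ V]

/-- A (convex) polytope: the convex hull of a finite set of points. -/
def IsPolytope (P : Set V) : Prop := ∃ s : Finset V, P = convexHull ℝ (↑s : Set V)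

/-- The dimension of a subset of a real vector space: the dimension of its
direction (the vector span of differences of its points). -/
noncomputable def pdim (S : Set V) : ℕ := Module.finrank ℝ (vectorSpan ℝ S)

/-- `F` is a face of the polytope `P`: either `F = P` or `F` is the intersection of `P`
with a supporting hyperplane. -/
def IsFace (P F : Set V) : Prop :=
  F = P ∨ ∃ (f : V →ₗ[ℝ] ℝ) (c : ℝ), (∀ x ∈ P, f x ≤ c) ∧ F = {x ∈ P | f x = c}

/-- A facet is a nonempty face of codimension one. -/
def IsFacet (P F : Set V) : Prop := IsFace P F ∧ F.Nonempty ∧ pdim F + 1 = pdim P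

/-- A vertex is a point whose singleton is a face. -/
def IsVertex (P : Set V) (v : V) : Prop := IsFace P {v}

/-- An edge is a nonempty one-dimensional face. -/
def IsEdge (P e : Set V) : Prop := IsFace P e ∧ e.Nonempty ∧ pdim e = 1

/-- A polytope is simple if every vertex lies on exactly `dim P` facets. -/
def IsSimple (P : Set V) : Prop :=
  ∀ v, IsVertex P v → {F | IsFacet P F ∧ v ∈ F}.ncard = pdim P

/-- The standard lattice `ℤⁿ ⊆ ℝⁿ`. -/
def stdLattice (n : ℕ) : AddSubgroup (Fin n → ℝ) :=
  ((Int.castAddHom ℝ).compLeft (Fin n)).range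

/-- The `n`-torus `𝕋ⁿ = ℝⁿ/ℤⁿ`. -/
abbrev Torus (n : ℕ) := (Fin n → ℝ) ⧸ stdLattice n

/-- The subgroup `Im(f_{F(x)}) ⊆ 𝕋ⁿ` attached to a point `x`: the image in `𝕋ⁿ` of
the real span of the isotropy vectors `λ(Fᵢ)` of the (non-exceptional) facets `Fᵢ`
containing `x` (these are exactly the ones containing the face having `x` in its
relative interior). -/
def subTorusOf {N n m : ℕ} (F : Fin m → Set (Fin N → ℝ)) (lam : Fin m → (Fin n → ℤ))
    (x : Fin N → ℝ) : AddSubgroup (Torus n) :=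
  AddSubgroup.map (QuotientAddGroup.mk' (stdLattice n))
    (Submodule.span ℝ
      {w | ∃ i, x ∈ F i ∧ w = fun j => ((lam i j : ℝ))}).toAddSubgroup

/-- The identification `(t, x) ∼_b (u, y) ⟺ x = y ∧ t - u ∈ Im(f_{F(x)})` on
`𝕋ⁿ × S`, for a subset `S` of the ambient space. -/
def bSetoid {N n m : ℕ} (S : Set (Fin N → ℝ)) (F : Fin m → Set (Fin N → ℝ))
    (lam : Fin m → (Fin n → ℤ)) : Setoid (Torus n × S) where
  r a b := (a.2 : Fin N → ℝ) = (b.2 : Fin N → ℝ) ∧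
    a.1 - b.1 ∈ subTorusOf F lam (a.2 : Fin N → ℝ)
  iseqv := by
    refine ⟨fun a => ⟨rfl, by simpa using (subTorusOf F lam _).zero_mem⟩, ?_, ?_⟩
    · rintro a b ⟨h1, h2⟩
      refine ⟨h1.symm, ?_⟩
      rw [← h1]
      simpa using (subTorusOf F lam _).neg_mem h2
    · rintro a b c ⟨h1, h2⟩ ⟨h3, h4⟩
      refine ⟨h1.trans h3, ?_⟩
      have : a.1 - c.1 = (a.1 - b.1) + (b.1 - c.1) := by abel
      rw [this]
      exact (subTorusOf F lam _).add_mem h2 (by rw [h1]; exact h4)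

/-- The space `W(Q, λ) = (𝕋ⁿ × Q)/∼_b` (and likewise the quasitoric orbifold model
`(𝕋ⁿ × Q_j)/∼` when applied to a facet `Q_j`). -/
def BSpace {N n m : ℕ} (S : Set (Fin N → ℝ)) (F : Fin m → Set (Fin N → ℝ))
    (lam : Fin m → (Fin n → ℤ)) := Quotient (bSetoid S F lam)

instance {N n m : ℕ} (S : Set (Fin N → ℝ)) (F : Fin m → Set (Fin N → ℝ))
    (lam : Fin m → (Fin n → ℤ)) : TopologicalSpace (BSpace S F lam) :=
  inferInstanceAs (TopologicalSpace (Quotient (bSetoid S F lam)))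

/-- The projection `π : W(Q, λ) → Q`, `[t, x] ↦ x`. -/
def bProj {N n m : ℕ} (S : Set (Fin N → ℝ)) (F : Fin m → Set (Fin N → ℝ))
    (lam : Fin m → (Fin n → ℤ)) : BSpace S F lam → (Fin N → ℝ) :=
  Quotient.lift (fun p => (p.2 : Fin N → ℝ)) (fun _ _ h => h.1)

/-!
The relation of the model `(Q_j, ξʲ)` is literally the restriction of `∼_b` along
`𝕋ⁿ × Q_j ↪ 𝕋ⁿ × Q`, whose image is the saturated set of all pairs lying over `Q_j`; hence the
model maps continuously and bijectively onto `π⁻¹(Q_j)`. This bijection is a homeomorphism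
because `Q_j` is closed in `Q`, and restricting a quotient map to the preimage of a closed set
yields a quotient map again.
-/

open Topology

theorem Topology.IsQuotientMap.codRestrict_comp_isClosedEmbedding {X Y A : Type*}
    [TopologicalSpace X] [TopologicalSpace Y] [TopologicalSpace A] {q : X → Y}
    (hq : IsQuotientMap q) {ι : A → X} (hι : IsClosedEmbedding ι) {T : Set Y}
    (hT : range ι = q ⁻¹' T) :
    IsQuotientMap (T.codRestrict (q ∘ ι) fun a => hT.subset (mem_range_self a)) := by
  have hT_closed : IsClosed T := hq.isClosed_preimage.mp (hT ▸ hι.isClosed_range)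
  refine isQuotientMap_iff_isClosed.2 ⟨?_, fun s => ?_⟩
  · rintro ⟨y, hy⟩
    obtain ⟨x, rfl⟩ := hq.surjective y
    obtain ⟨a, rfl⟩ := hT.symm.subset hy
    exact ⟨a, rfl⟩
  · have hs : q ⁻¹' ((↑) '' s) ⊆ range ι := hT ▸ preimage_mono (Subtype.coe_image_subset T s)
    rw [hT_closed.isClosedEmbedding_subtypeVal.isClosed_iff_image_isClosed,
      ← hq.isClosed_preimage, hι.isClosed_iff_preimage_isClosed hs]
    congr! 1
    ext a
    exact Subtype.val_injective.mem_set_image (a := T.codRestrict (q ∘ ι) _ a)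

noncomputable def Setoid.comapHomeomorphOfIsClosedEmbedding {X A : Type*} [TopologicalSpace X]
    [TopologicalSpace A] (s : Setoid X) {ι : A → X} (hι : IsClosedEmbedding ι)
    {T : Set (Quotient s)} (hT : range ι = Quotient.mk s ⁻¹' T) :
    Quotient (s.comap ι) ≃ₜ T :=
  have hq := isQuotientMap_quotient_mk'.codRestrict_comp_isClosedEmbedding hι hT
  (Homeomorph.Quotient.congrRight fun _ _ => (Subtype.ext_iff.trans Quotient.eq).symm).trans
    (hq.homeomorph (f := ⟨_, hq.continuous⟩))

theorem IsFace.subset {P G : Set V} (h : IsFace P G) : G ⊆ P := by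
  rcases h with rfl | ⟨f, c, -, rfl⟩
  exacts [subset_rfl, sep_subset P _]

theorem IsFace.isClosedEmbedding_inclusion [TopologicalSpace V] [IsTopologicalAddGroup V]
    [ContinuousSMul ℝ V] [T2Space V] [FiniteDimensional ℝ V] {P G : Set V} (h : IsFace P G) :
    IsClosedEmbedding (inclusion h.subset) := by
  refine .inclusion h.subset ?_
  rcases h with rfl | ⟨f, c, -, rfl⟩
  · simp
  · simpa using isClosed_eq (f.continuous_of_finiteDimensional.comp continuous_subtype_val)
      (continuous_const (y := c))

theorem mk_preimage_bProj_preimage {N n m : ℕ} {S T : Set (Fin N → ℝ)} (hTS : T ⊆ S)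
    (F : Fin m → Set (Fin N → ℝ)) (lam : Fin m → (Fin n → ℤ)) :
    Quotient.mk (bSetoid S F lam) ⁻¹' (bProj S F lam ⁻¹' T) =
      range (Prod.map id (inclusion hTS)) := by
  ext ⟨t, x⟩
  simp [bProj]

theorem preimage_of_exceptional_facet_homeo_model_general
    {n k m : ℕ} (Q : Set (Fin (n + 1) → ℝ))
    (Qe : Fin k → Set (Fin (n + 1) → ℝ)) (hQe : ∀ j, IsFacet Q (Qe j))
    (F : Fin m → Set (Fin (n + 1) → ℝ))
    (lam : Fin m → (Fin n → ℤ))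
    (j : Fin k) :
    Nonempty ((bProj Q F lam ⁻¹' Qe j : Set (BSpace Q F lam)) ≃ₜ
      BSpace (Qe j) F lam) := by
  have hface := (hQe j).1
  set ι : Torus n × Qe j → Torus n × Q := Prod.map id (inclusion hface.subset)
  have hι : IsClosedEmbedding ι := IsClosedEmbedding.id.prodMap hface.isClosedEmbedding_inclusion
  have hmodel : bSetoid (Qe j) F lam = (bSetoid Q F lam).comap ι := rfl
  exact ⟨(hmodel ▸ (bSetoid Q F lam).comapHomeomorphOfIsClosedEmbedding hι
    (mk_preimage_bProj_preimage hface.subset F lam).symm).symm⟩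

/-- Let `Q` be a simple `(n+1)`-polytope with pairwise disjoint exceptional facets
`Q₁, …, Q_k` containing all vertices of `Q`, and `λ` an isotropy function on the
remaining facets `F₁, …, F_m`.  Then for each `j`, the subspace
`π⁻¹(Q_j) ⊆ W(Q, λ) = (𝕋ⁿ × Q)/∼_b` is homeomorphic to the quasitoric orbifold
space `(𝕋ⁿ × Q_j)/∼` of the characteristic model `(Q_j, ξʲ)`, where `ξʲ` is the
restriction of `λ` to the facets of `Q_j` (i.e. `ξʲ(Q_j ∩ Fᵢ) = λ(Fᵢ)`). -/
theorem preimage_of_exceptional_facet_homeo_model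
    {n k m : ℕ} (Q : Set (Fin (n + 1) → ℝ)) (hQ : IsPolytope Q)
    (hdim : pdim Q = n + 1) (hsimple : IsSimple Q)
    (Qe : Fin k → Set (Fin (n + 1) → ℝ)) (hQe : ∀ j, IsFacet Q (Qe j))
    (hdisj : ∀ j j', j ≠ j' → Qe j ∩ Qe j' = ∅)
    (hvert : ∀ v, IsVertex Q v → ∃ j, v ∈ Qe j)
    (F : Fin m → Set (Fin (n + 1) → ℝ)) (hF : ∀ i, IsFacet Q (F i))
    (hall : {G | IsFacet Q G} = Set.range Qe ∪ Set.range F)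
    (lam : Fin m → (Fin n → ℤ))
    (hlam : ∀ I : Set (Fin m), (⋂ i ∈ I, F i).Nonempty →
      LinearIndependent ℤ (fun i : I => lam i))
    (j : Fin k) :
    Nonempty ((bProj Q F lam ⁻¹' Qe j : Set (BSpace Q F lam)) ≃ₜ
      BSpace (Qe j) F lam) :=
  preimage_of_exceptional_facet_homeo_model_general Q Qe hQe F lam j
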